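/- Main theorem: Let Ê be a sublinear expectation on H, and let X, Y ∈ H be one-dimensional random variables such that X has distributional uncertainty, Y is not constant, the distribution of Y admits a representation Ê[ψ(Y)] = max_{P∈P} E_P[ψ] over a family P of Borel probability measures on ℝ where the max is attained, X is independent from Y, and Y is independent from X. Then Y is maximally distributed: there exists a closed set Γ ⊆ ℝ such that Ê[ψ(Y)] = sup_{y∈Γ} ψ(y) for all bounded Lipschitz ψ: ℝ → ℝ. -/

import Mathlib

open MeasureTheory

structure SLE (Ω : Type*) where
  H : Submodule ℝ (Ω → ℝ)
  E : (Ω → ℝ) → ℝ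
  const_mem : ∀ c : ℝ, (fun _ => c) ∈ H
  mono : ∀ f g, f ∈ H → g ∈ H → (∀ ω, f ω ≤ g ω) → E f ≤ E g
  const : ∀ c : ℝ, E (fun _ => c) = c
  subadd : ∀ f g, f ∈ H → g ∈ H → E (f + g) ≤ E f + E g
  poshom : ∀ f, f ∈ H → ∀ l : ℝ, 0 ≤ l → E (l • f) = l * E f

def BLip (φ : ℝ → ℝ) : Prop :=
  (∃ K, LipschitzWith K φ) ∧ ∃ C, ∀ x, |φ x| ≤ C

def BLip2 (φ : ℝ → ℝ → ℝ) : Prop :=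
  (∃ K, LipschitzWith K (fun p : ℝ × ℝ => φ p.1 p.2)) ∧ ∃ C, ∀ x y, |φ x y| ≤ C

/-!
Testing both independences against `φ x * ψ y`, where `φ ≥ 0` has upper expectation `1` and
lower expectation `ε < 1` under the law of `X` (this is where distributional uncertainty enters),
shows that `Ê` commutes with `G t = max t (ε t)` on functions of `Y`. The iterates of `G` are
`max t (εⁿ t)`, which converge uniformly to `t⁺`, so `Ê[ψ(Y)⁺] = Ê[ψ(Y)]⁺`; applied to
`ψ - Ê[ψ(Y)]` this gives `Ê[(ψ(Y) - Ê[ψ(Y)])⁺] = 0`, hence `ψ ≤ Ê[ψ(Y)]` almost surely under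
every representing measure. Take `Γ = {y | ψ y ≤ Ê[ψ(Y)] for all ψ}`: it is closed, has full
measure by a Lindelöf argument, and the measure attaining `Ê[ψ(Y)]` charges a point of `Γ`
where `ψ` equals `Ê[ψ(Y)]`.
-/

open Filter Topology
open scoped NNReal

lemma BLip.continuous {ψ : ℝ → ℝ} (hψ : BLip ψ) : Continuous ψ := by
  obtain ⟨⟨K, hK⟩, -⟩ := hψ
  exact hK.continuous

lemma BLip.const (c : ℝ) : BLip fun _ => c :=
  ⟨⟨0, LipschitzWith.const c⟩, |c|, fun _ => le_rfl⟩

lemma BLip.integrable {ψ : ℝ → ℝ} (hψ : BLip ψ) (P : Measure ℝ) [IsFiniteMeasure P] :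
    Integrable ψ P := by
  obtain ⟨C, hC⟩ := hψ.2
  exact (integrable_const C).mono' hψ.continuous.aestronglyMeasurable
    (Eventually.of_forall hC)

lemma LipschitzWith.blip_comp {g : ℝ → ℝ} {K : ℝ≥0} (hg : LipschitzWith K g) {ψ : ℝ → ℝ}
    (hψ : BLip ψ) : BLip fun y => g (ψ y) := by
  obtain ⟨⟨L, hL⟩, C, hC⟩ := hψ
  refine ⟨⟨K * L, hg.comp hL⟩, |g 0| + K * C, fun y => ?_⟩
  have h := hg.dist_le_mul (ψ y) 0
  rw [Real.dist_eq, Real.dist_eq, sub_zero] at h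
  have hK : K * |ψ y| ≤ K * C := by gcongr; exact hC y
  linarith [abs_sub_abs_le_abs_sub (g (ψ y)) (g 0)]

lemma BLip.max_mul {ψ : ℝ → ℝ} (hψ : BLip ψ) (a : ℝ) : BLip fun y => max (ψ y) (a * ψ y) :=
  (LipschitzWith.id.max (lipschitzWith_smul a)).blip_comp hψ

lemma BLip.max_zero {ψ : ℝ → ℝ} (hψ : BLip ψ) : BLip fun y => max (ψ y) 0 :=
  (LipschitzWith.id.max (LipschitzWith.const 0)).blip_comp hψ

lemma BLip.sub_const {ψ : ℝ → ℝ} (hψ : BLip ψ) (c : ℝ) : BLip fun y => ψ y - c :=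
  (LipschitzWith.id.sub (LipschitzWith.const c)).blip_comp hψ

lemma BLip.const_mul_add_const {ψ : ℝ → ℝ} (hψ : BLip ψ) (r c : ℝ) :
    BLip fun y => r * (ψ y + c) :=
  ((lipschitzWith_smul r).comp (LipschitzWith.id.add (LipschitzWith.const c))).blip_comp hψ

lemma LipschitzWith.mul_of_abs_le {α : Type*} [PseudoMetricSpace α] {f g : α → ℝ} {Kf Kg : ℝ≥0}
    (hf : LipschitzWith Kf f) (hg : LipschitzWith Kg g) {Cf Cg : ℝ} (hCf : ∀ x, |f x| ≤ Cf)
    (hCg : ∀ x, |g x| ≤ Cg) :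
    LipschitzWith (Real.toNNReal (Cf * Kg + Cg * Kf)) fun x => f x * g x := by
  refine LipschitzWith.of_dist_le' fun x y => ?_
  have hf' := hf.dist_le_mul x y
  have hg' := hg.dist_le_mul x y
  rw [Real.dist_eq] at hf' hg' ⊢
  calc |f x * g x - f y * g y| ≤ |f x| * |g x - g y| + |g y| * |f x - f y| := by
        rw [← abs_mul, ← abs_mul]
        exact (abs_add_le _ _).trans_eq' (by ring_nf)
    _ ≤ Cf * (Kg * dist x y) + Cg * (Kf * dist x y) := by
        gcongr
        · exact (abs_nonneg _).trans (hCf x)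
        · exact hCf x
        · exact (abs_nonneg _).trans (hCg y)
        · exact hCg y
    _ = (Cf * Kg + Cg * Kf) * dist x y := by ring

lemma BLip.mul {φ ψ : ℝ → ℝ} (hφ : BLip φ) (hψ : BLip ψ) : BLip2 fun x y => φ x * ψ y := by
  obtain ⟨⟨Kφ, hKφ⟩, Cφ, hCφ⟩ := hφ
  obtain ⟨⟨Kψ, hKψ⟩, Cψ, hCψ⟩ := hψ
  refine ⟨⟨_, (hKφ.comp LipschitzWith.prod_fst).mul_of_abs_le (hKψ.comp LipschitzWith.prod_snd)
    (fun p => hCφ p.1) (fun p => hCψ p.2)⟩, Cφ * Cψ, fun x y => ?_⟩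
  rw [abs_mul]
  exact mul_le_mul (hCφ x) (hCψ y) (abs_nonneg _) ((abs_nonneg _).trans (hCφ x))

lemma max_max_mul_mul {a b : ℝ} (ha₀ : 0 ≤ a) (ha₁ : a ≤ 1) (hb₁ : b ≤ 1) (t : ℝ) :
    max (max t (a * t)) (b * max t (a * t)) = max t (b * a * t) := by
  have hba : b * a ≤ 1 := by
    rcases le_or_gt 0 b with hb | hb <;> nlinarith
  rcases le_or_gt 0 t with ht | ht
  · rw [max_eq_left (show a * t ≤ t by nlinarith), max_eq_left (by nlinarith),
      max_eq_left (by nlinarith)]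
  · have hat : a * t ≤ 0 := mul_nonpos_of_nonneg_of_nonpos ha₀ ht.le
    rw [max_eq_right (show t ≤ a * t by nlinarith), max_eq_right (by nlinarith),
      max_eq_right (by nlinarith), mul_assoc]

lemma abs_max_mul_sub_max_zero_le {a t C : ℝ} (ha : 0 ≤ a) (ht : |t| ≤ C) :
    |max t (a * t) - max t 0| ≤ a * C :=
  calc |max t (a * t) - max t 0| ≤ max |t - t| |a * t - 0| := abs_max_sub_max_le_max _ _ _ _
    _ = a * |t| := by rw [sub_self, abs_zero, sub_zero, abs_mul, abs_of_nonneg ha,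
        max_eq_right (by positivity)]
    _ ≤ a * C := by gcongr

namespace SLE

variable {Ω : Type*} (S : SLE Ω)

lemma E_mul {f : Ω → ℝ} (hf : f ∈ S.H) {l : ℝ} (hl : 0 ≤ l) :
    S.E (fun ω => l * f ω) = l * S.E f :=
  S.poshom f hf l hl

lemma E_add_const {f : Ω → ℝ} (hf : f ∈ S.H) (c : ℝ) : S.E (fun ω => f ω + c) = S.E f + c := by
  have hfc : (fun ω => f ω + c) ∈ S.H := S.H.add_mem hf (S.const_mem c)
  have h₁ := S.subadd f (fun _ => c) hf (S.const_mem c)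
  have h₂ := S.subadd (fun ω => f ω + c) (fun _ => -c) hfc (S.const_mem (-c))
  rw [S.const] at h₁ h₂
  have hf' : ((fun ω => f ω + c) + fun _ => -c) = f := by ext; simp
  rw [hf'] at h₂
  exact le_antisymm h₁ (by linarith)

lemma E_mul_add_const {f : Ω → ℝ} (hf : f ∈ S.H) {l : ℝ} (hl : 0 ≤ l) (c : ℝ) :
    S.E (fun ω => l * (f ω + c)) = l * (S.E f + c) := by
  rw [← S.E_add_const hf c]
  exact S.E_mul (f := fun ω => f ω + c) (S.H.add_mem hf (S.const_mem c)) hl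

lemma abs_E_sub_E_le {f g : Ω → ℝ} (hf : f ∈ S.H) (hg : g ∈ S.H) {δ : ℝ}
    (h : ∀ ω, |f ω - g ω| ≤ δ) : |S.E f - S.E g| ≤ δ := by
  have hle : ∀ {u v : Ω → ℝ}, u ∈ S.H → v ∈ S.H → (∀ ω, |u ω - v ω| ≤ δ) → S.E u ≤ S.E v + δ :=
    fun {u v} hu hv huv => (S.E_add_const hv δ) ▸
      S.mono _ _ hu (S.H.add_mem hv (S.const_mem δ)) fun ω => by linarith [(abs_le.1 (huv ω)).2]
  rw [abs_le]
  constructor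
  · linarith [hle hg hf fun ω => abs_sub_comm (f ω) (g ω) ▸ h ω]
  · linarith [hle hf hg h]

lemma tendsto_E_of_abs_sub_le {ι : Type*} {l : Filter ι} {f : ι → Ω → ℝ} {g : Ω → ℝ}
    (hf : ∀ i, f i ∈ S.H) (hg : g ∈ S.H) {δ : ι → ℝ} (hfg : ∀ i ω, |f i ω - g ω| ≤ δ i)
    (hδ : Tendsto δ l (𝓝 0)) : Tendsto (fun i => S.E (f i)) l (𝓝 (S.E g)) :=
  tendsto_iff_norm_sub_tendsto_zero.2 <|
    squeeze_zero (fun _ => norm_nonneg _) (fun i => S.abs_E_sub_E_le (hf i) hg (hfg i)) hδ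

lemma pos_E_add_E_neg_of_ne {f g : Ω → ℝ} (hf : f ∈ S.H) (hg : g ∈ S.H)
    (h : S.E (f + g) ≠ S.E f + S.E g) : 0 < S.E g + S.E (-g) := by
  have hlt := (S.subadd f g hf hg).lt_of_ne h
  have hle := S.subadd (f + g) (-g) (S.H.add_mem hf hg) (S.H.neg_mem hg)
  rw [add_neg_cancel_right] at hle
  linarith

lemma E_mul_eq_max {f : Ω → ℝ} (hf : f ∈ S.H) {ε : ℝ} (h₁ : S.E f = 1) (hε : S.E (-f) = -ε)
    (q : ℝ) : S.E (fun ω => q * f ω) = max q (ε * q) := by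
  have hε₁ : ε ≤ 1 := by
    have h := S.subadd f (-f) hf (S.H.neg_mem hf)
    rw [add_neg_cancel, h₁, hε] at h
    have h₀ : S.E 0 = 0 := S.const 0
    linarith
  rcases le_or_gt 0 q with hq | hq
  · rw [S.E_mul hf hq, h₁, mul_one, max_eq_left (by nlinarith)]
  · have hneg : (fun ω => q * f ω) = fun ω => -q * (-f) ω := by ext; simp
    rw [hneg, S.E_mul (S.H.neg_mem hf) (by linarith), hε, max_eq_right (by nlinarith)]
    ring

lemma exists_normalized_of_pos_E_add_E_neg {X : Ω → ℝ}
    (hcompX : ∀ φ : ℝ → ℝ, BLip φ → (fun ω => φ (X ω)) ∈ S.H) {ψ : ℝ → ℝ} (hψ : BLip ψ)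
    (hgap : 0 < S.E (fun ω => ψ (X ω)) + S.E (fun ω => -ψ (X ω))) :
    ∃ (φ : ℝ → ℝ) (ε : ℝ), BLip φ ∧ (∀ x, 0 ≤ φ x) ∧ 0 ≤ ε ∧ ε < 1 ∧
      S.E (fun ω => φ (X ω)) = 1 ∧ S.E (fun ω => -φ (X ω)) = -ε := by
  obtain ⟨C, hC⟩ := hψ.2
  have hf : (fun ω => ψ (X ω)) ∈ S.H := hcompX ψ hψ
  have hnf : (fun ω => -ψ (X ω)) ∈ S.H := S.H.neg_mem hf
  set a := S.E fun ω => ψ (X ω)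
  set b := S.E fun ω => -ψ (X ω)
  have hbC : b ≤ C := (S.const C) ▸
    S.mono _ _ hnf (S.const_mem C) fun ω => neg_le_of_neg_le (abs_le.1 (hC (X ω))).1
  have hr : 0 < a + C := by linarith
  refine ⟨fun x => (a + C)⁻¹ * (ψ x + C), (a + C)⁻¹ * (C - b), hψ.const_mul_add_const _ _,
    fun x => mul_nonneg (inv_pos.2 hr).le (by linarith [(abs_le.1 (hC x)).1]),
    mul_nonneg (inv_pos.2 hr).le (by linarith), by rw [inv_mul_lt_iff₀ hr]; linarith, ?_, ?_⟩
  · exact (S.E_mul_add_const hf (inv_pos.2 hr).le C).trans (inv_mul_cancel₀ hr.ne')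
  · have hneg : (fun ω => -((a + C)⁻¹ * (ψ (X ω) + C))) =
        fun ω => (a + C)⁻¹ * (-ψ (X ω) + -C) := by ext; ring
    rw [hneg, S.E_mul_add_const hnf (inv_pos.2 hr).le]
    ring

lemma E_max_mul_eq_of_swap {f g : Ω → ℝ} (hf : f ∈ S.H) (hf₀ : ∀ ω, 0 ≤ f ω) (hg : g ∈ S.H)
    {ε : ℝ} (h₁ : S.E f = 1) (hε : S.E (-f) = -ε)
    (hswap : S.E (fun ω => S.E fun ω' => f ω * g ω') = S.E (fun ω => S.E fun ω' => f ω' * g ω)) :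
    S.E (fun ω => max (g ω) (ε * g ω)) = max (S.E g) (ε * S.E g) := by
  have hq := S.E_mul_eq_max hf h₁ hε
  calc S.E (fun ω => max (g ω) (ε * g ω))
      = S.E (fun ω => S.E fun ω' => f ω' * g ω) := by simp only [mul_comm (f _), hq]
    _ = S.E (fun ω => S.E fun ω' => f ω * g ω') := hswap.symm
    _ = S.E (fun ω => S.E g * f ω) := by
        congr 1; ext ω; rw [S.E_mul hg (hf₀ ω), mul_comm]
    _ = max (S.E g) (ε * S.E g) := hq _

lemma E_max_pow_mul {Y : Ω → ℝ} {ε : ℝ} (hε₀ : 0 ≤ ε) (hε₁ : ε ≤ 1)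
    (hG : ∀ ψ : ℝ → ℝ, BLip ψ → S.E (fun ω => max (ψ (Y ω)) (ε * ψ (Y ω))) =
      max (S.E fun ω => ψ (Y ω)) (ε * S.E fun ω => ψ (Y ω)))
    {ψ : ℝ → ℝ} (hψ : BLip ψ) (n : ℕ) :
    S.E (fun ω => max (ψ (Y ω)) (ε ^ n * ψ (Y ω))) =
      max (S.E fun ω => ψ (Y ω)) (ε ^ n * S.E fun ω => ψ (Y ω)) := by
  induction n with
  | zero => simp only [pow_zero, one_mul, max_self]
  | succ n ih =>
    have h := hG _ (hψ.max_mul (ε ^ n))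
    rw [ih] at h
    simpa only [max_max_mul_mul (pow_nonneg hε₀ n) (pow_le_one₀ hε₀ hε₁) hε₁, ← pow_succ'] using h

lemma E_max_zero {Y : Ω → ℝ} (hcompY : ∀ ψ : ℝ → ℝ, BLip ψ → (fun ω => ψ (Y ω)) ∈ S.H) {ε : ℝ}
    (hε₀ : 0 ≤ ε) (hε₁ : ε < 1)
    (hG : ∀ ψ : ℝ → ℝ, BLip ψ → S.E (fun ω => max (ψ (Y ω)) (ε * ψ (Y ω))) =
      max (S.E fun ω => ψ (Y ω)) (ε * S.E fun ω => ψ (Y ω)))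
    {ψ : ℝ → ℝ} (hψ : BLip ψ) :
    S.E (fun ω => max (ψ (Y ω)) 0) = max (S.E fun ω => ψ (Y ω)) 0 := by
  obtain ⟨C, hC⟩ := hψ.2
  have hpow := tendsto_pow_atTop_nhds_zero_of_lt_one hε₀ hε₁
  have hlim : Tendsto (fun n : ℕ => S.E fun ω => max (ψ (Y ω)) (ε ^ n * ψ (Y ω))) atTop
      (𝓝 (S.E fun ω => max (ψ (Y ω)) 0)) :=
    S.tendsto_E_of_abs_sub_le (fun n => hcompY _ (hψ.max_mul _)) (hcompY _ hψ.max_zero)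
      (fun n ω => abs_max_mul_sub_max_zero_le (pow_nonneg hε₀ n) (hC (Y ω)))
      (by simpa using hpow.mul_const C)
  have hlim' : Tendsto (fun n : ℕ => S.E fun ω => max (ψ (Y ω)) (ε ^ n * ψ (Y ω))) atTop
      (𝓝 (max (S.E fun ω => ψ (Y ω)) 0)) := by
    simp only [S.E_max_pow_mul hε₀ hε₁.le hG hψ]
    simpa using tendsto_const_nhds.max (hpow.mul_const (S.E fun ω => ψ (Y ω)))
  exact tendsto_nhds_unique hlim hlim'

lemma E_max_sub_E_eq_zero {Y : Ω → ℝ}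
    (hcompY : ∀ ψ : ℝ → ℝ, BLip ψ → (fun ω => ψ (Y ω)) ∈ S.H) {ε : ℝ}
    (hε₀ : 0 ≤ ε) (hε₁ : ε < 1)
    (hG : ∀ ψ : ℝ → ℝ, BLip ψ → S.E (fun ω => max (ψ (Y ω)) (ε * ψ (Y ω))) =
      max (S.E fun ω => ψ (Y ω)) (ε * S.E fun ω => ψ (Y ω)))
    {ψ : ℝ → ℝ} (hψ : BLip ψ) :
    S.E (fun ω => max (ψ (Y ω) - S.E fun ω' => ψ (Y ω')) 0) = 0 := by
  rw [S.E_max_zero hcompY hε₀ hε₁ hG (hψ.sub_const _)]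
  simp only [sub_eq_add_neg, S.E_add_const (hcompY ψ hψ), add_neg_cancel, max_self]

end SLE

lemma ae_le_of_integral_max_sub_nonpos {α : Type*} [MeasurableSpace α] {P : Measure α}
    {ψ : α → ℝ} {c : ℝ} (hi : Integrable (fun y => max (ψ y - c) 0) P)
    (h : ∫ y, max (ψ y - c) 0 ∂P ≤ 0) : ∀ᵐ y ∂P, ψ y ≤ c := by
  have hnn : 0 ≤ fun y => max (ψ y - c) 0 := fun y => le_max_right _ _
  filter_upwards [(integral_eq_zero_iff_of_nonneg hnn hi).1 (h.antisymm (integral_nonneg hnn))]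
    with y hy
  linarith [le_max_left (ψ y - c) 0, show max (ψ y - c) 0 = 0 from hy]

lemma ae_eq_of_ae_le_of_integral_eq {α : Type*} [MeasurableSpace α] {P : Measure α}
    [IsProbabilityMeasure P] {ψ : α → ℝ} (hi : Integrable ψ P) {c : ℝ} (hle : ∀ᵐ y ∂P, ψ y ≤ c)
    (hint : ∫ y, ψ y ∂P = c) : ∀ᵐ y ∂P, ψ y = c :=
  (integral_eq_iff_of_ae_le hi (integrable_const c) hle).1 (by simp [hint])

section Support

variable {e : (ℝ → ℝ) → ℝ}

lemma isClosed_setOf_forall_blip_le : IsClosed {y | ∀ ψ, BLip ψ → ψ y ≤ e ψ} := by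
  simp only [Set.ofPred_forall]
  exact isClosed_iInter fun ψ => isClosed_iInter fun hψ =>
    isClosed_le hψ.continuous continuous_const

/-- The exceptional sets `{e ψ < ψ}` are open, so by Lindelöf countably many of them cover
their union. -/
lemma ae_forall_blip_le {P : Measure ℝ} (h : ∀ ψ, BLip ψ → ∀ᵐ y ∂P, ψ y ≤ e ψ) :
    ∀ᵐ y ∂P, ∀ ψ, BLip ψ → ψ y ≤ e ψ := by
  obtain ⟨T, hTc, hT⟩ := TopologicalSpace.isOpen_iUnion_countable
    (fun ψ : {ψ // BLip ψ} => {y | e ψ < ψ.1 y})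
    fun ψ => isOpen_lt continuous_const ψ.2.continuous
  filter_upwards [(ae_ball_iff hTc).2 fun ψ _ => h ψ.1 ψ.2] with y hy ψ hψ
  by_contra hlt
  have hyU : y ∈ ⋃ ψ : {ψ // BLip ψ}, {y | e ψ < ψ.1 y} :=
    Set.mem_iUnion.2 ⟨⟨ψ, hψ⟩, not_le.1 hlt⟩
  rw [← hT] at hyU
  obtain ⟨ψ', hψ'T, hψ'⟩ := Set.mem_iUnion₂.1 hyU
  exact (hy ψ' hψ'T).not_gt hψ'

theorem exists_isClosed_eq_sSup_image {Ps : Set (Measure ℝ)}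
    (hprob : ∀ P ∈ Ps, IsProbabilityMeasure P)
    (hatt : ∀ ψ, BLip ψ → ∃ P ∈ Ps, ∫ y, ψ y ∂P = e ψ)
    (hle : ∀ ψ, BLip ψ → ∀ P ∈ Ps, ∀ᵐ y ∂P, ψ y ≤ e ψ) :
    ∃ Γ : Set ℝ, IsClosed Γ ∧ Γ.Nonempty ∧ ∀ ψ, BLip ψ → e ψ = sSup (ψ '' Γ) := by
  set Γ := {y | ∀ ψ, BLip ψ → ψ y ≤ e ψ}
  have hattΓ : ∀ ψ, BLip ψ → ∃ y ∈ Γ, ψ y = e ψ := by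
    intro ψ hψ
    obtain ⟨P, hP, hint⟩ := hatt ψ hψ
    have := hprob P hP
    exact ((ae_forall_blip_le fun ψ hψ => hle ψ hψ P hP).and
      (ae_eq_of_ae_le_of_integral_eq (hψ.integrable P) (hle ψ hψ P hP) hint)).exists
  obtain ⟨y, hy, -⟩ := hattΓ _ (BLip.const 0)
  refine ⟨Γ, isClosed_setOf_forall_blip_le, ⟨y, hy⟩, fun ψ hψ => ?_⟩
  obtain ⟨y₀, hy₀, hψy₀⟩ := hattΓ ψ hψ
  have hgreatest : IsGreatest (ψ '' Γ) (e ψ) :=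
    ⟨⟨y₀, hy₀, hψy₀⟩, Set.forall_mem_image.2 fun y hy => hy ψ hψ⟩
  exact hgreatest.csSup_eq.symm

end Support

theorem stmt18_general {Ω : Type*} (S : SLE Ω) (X Y : Ω → ℝ)
    (hcompX : ∀ φ : ℝ → ℝ, BLip φ → (fun ω => φ (X ω)) ∈ S.H)
    (hcompY : ∀ φ : ℝ → ℝ, BLip φ → (fun ω => φ (Y ω)) ∈ S.H)
    (hunc : ¬ ∀ ψ₁ ψ₂, BLip ψ₁ → BLip ψ₂ →
      S.E (fun ω => ψ₁ (X ω) + ψ₂ (X ω)) = S.E (fun ω => ψ₁ (X ω)) + S.E (fun ω => ψ₂ (X ω)))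
    (Ps : Set (Measure ℝ))
    (hprob : ∀ P ∈ Ps, IsProbabilityMeasure P)
    (hub : ∀ ψ, BLip ψ → ∀ P ∈ Ps, ∫ y, ψ y ∂P ≤ S.E (fun ω => ψ (Y ω)))
    (hatt : ∀ ψ, BLip ψ → ∃ P ∈ Ps, ∫ y, ψ y ∂P = S.E (fun ω => ψ (Y ω)))
    (hYindX : ∀ φ : ℝ → ℝ → ℝ, BLip2 φ →
      S.E (fun ω => φ (X ω) (Y ω)) = S.E (fun ω => S.E (fun ω' => φ (X ω) (Y ω'))))
    (hXindY : ∀ φ : ℝ → ℝ → ℝ, BLip2 φ →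
      S.E (fun ω => φ (X ω) (Y ω)) = S.E (fun ω => S.E (fun ω' => φ (X ω') (Y ω)))) :
    ∃ Γ : Set ℝ, IsClosed Γ ∧ Γ.Nonempty ∧
      ∀ ψ, BLip ψ → S.E (fun ω => ψ (Y ω)) = sSup (ψ '' Γ) := by
  push Not at hunc
  obtain ⟨ψ₁, ψ₂, hψ₁, hψ₂, hne⟩ := hunc
  obtain ⟨φ, ε, hφ, hφ₀, hε₀, hε₁, h₁, hε⟩ := S.exists_normalized_of_pos_E_add_E_neg hcompX hψ₂
    (S.pos_E_add_E_neg_of_ne (hcompX ψ₁ hψ₁) (hcompX ψ₂ hψ₂) hne)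
  have hG : ∀ ψ : ℝ → ℝ, BLip ψ → S.E (fun ω => max (ψ (Y ω)) (ε * ψ (Y ω))) =
      max (S.E fun ω => ψ (Y ω)) (ε * S.E fun ω => ψ (Y ω)) := fun ψ hψ =>
    S.E_max_mul_eq_of_swap (hcompX φ hφ) (fun ω => hφ₀ _) (hcompY ψ hψ) h₁ hε
      ((hYindX _ (hφ.mul hψ)).symm.trans (hXindY _ (hφ.mul hψ)))
  refine exists_isClosed_eq_sSup_image hprob hatt fun ψ hψ P hP => ?_
  have := hprob P hP
  have hψ' := (hψ.sub_const (S.E fun ω => ψ (Y ω))).max_zero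
  exact ae_le_of_integral_max_sub_nonpos (hψ'.integrable P)
    ((hub _ hψ' P hP).trans (S.E_max_sub_E_eq_zero hcompY hε₀ hε₁ hG hψ).le)

theorem stmt18 {Ω : Type*} (S : SLE Ω) (X Y : Ω → ℝ) (hX : X ∈ S.H) (hY : Y ∈ S.H)
    (hmemXY : ∀ φ : ℝ → ℝ → ℝ, BLip2 φ → (fun ω => φ (X ω) (Y ω)) ∈ S.H)
    (hcompX : ∀ φ : ℝ → ℝ, BLip φ → (fun ω => φ (X ω)) ∈ S.H)
    (hcompY : ∀ φ : ℝ → ℝ, BLip φ → (fun ω => φ (Y ω)) ∈ S.H)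
    (hunc : ¬ ∀ ψ₁ ψ₂, BLip ψ₁ → BLip ψ₂ →
      S.E (fun ω => ψ₁ (X ω) + ψ₂ (X ω)) = S.E (fun ω => ψ₁ (X ω)) + S.E (fun ω => ψ₂ (X ω)))
    (hYnc : ∃ ω₁ ω₂, Y ω₁ ≠ Y ω₂)
    (Ps : Set (Measure ℝ)) (hPs : Ps.Nonempty)
    (hprob : ∀ P ∈ Ps, IsProbabilityMeasure P)
    (hub : ∀ ψ, BLip ψ → ∀ P ∈ Ps, ∫ y, ψ y ∂P ≤ S.E (fun ω => ψ (Y ω)))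
    (hatt : ∀ ψ, BLip ψ → ∃ P ∈ Ps, ∫ y, ψ y ∂P = S.E (fun ω => ψ (Y ω)))
    (hYindX : ∀ φ : ℝ → ℝ → ℝ, BLip2 φ →
      S.E (fun ω => φ (X ω) (Y ω)) = S.E (fun ω => S.E (fun ω' => φ (X ω) (Y ω'))))
    (hXindY : ∀ φ : ℝ → ℝ → ℝ, BLip2 φ →
      S.E (fun ω => φ (X ω) (Y ω)) = S.E (fun ω => S.E (fun ω' => φ (X ω') (Y ω)))) :
    ∃ Γ : Set ℝ, IsClosed Γ ∧ Γ.Nonempty ∧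
      ∀ ψ, BLip ψ → S.E (fun ω => ψ (Y ω)) = sSup (ψ '' Γ) :=
  stmt18_general S X Y hcompX hcompY hunc Ps hprob hub hatt hYindX hXindY
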